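/- Representation theorem for conceptual preferential ordered models: a binary relation on 𝓛-formulas is a loop-cumulative consequence relation if and only if it equals |~_𝓜 for some conceptual preferential ordered model 𝓜, i.e., a conceptual preferential model whose relation ≺ is a strict partial order. -/
import Mathlib


namespace DR

/-- Formulas of the lattice-based language 𝓛: variables, ⊥, ⊤, ∧, ∨. -/
inductive Fm : Type where
  | var : ℕ → Fm
  | bot : Fm
  | top : Fm
  | and : Fm → Fm → Fm
  | or  : Fm → Fm → Fm

/-- A polarity (formal context) (A, X, I). -/
structure Polarity : Type 1 where
  Obj : Type
  Feat : Type
  I : Obj → Feat → Prop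

namespace Polarity

variable (P : Polarity)

def up (B : Set P.Obj) : Set P.Feat := {x | ∀ b ∈ B, P.I b x}
def dn (Y : Set P.Feat) : Set P.Obj := {a | ∀ y ∈ Y, P.I a y}

lemma subset_dn_up (B : Set P.Obj) : B ⊆ P.dn (P.up B) :=
  fun _ ha _ hx => hx _ ha

lemma subset_up_dn (Y : Set P.Feat) : Y ⊆ P.up (P.dn Y) :=
  fun _ hx _ ha => ha _ hx

lemma up_anti {B C : Set P.Obj} (h : B ⊆ C) : P.up C ⊆ P.up B :=
  fun _ hx b hb => hx b (h hb)

lemma dn_anti {Y Z : Set P.Feat} (h : Y ⊆ Z) : P.dn Z ⊆ P.dn Y :=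
  fun _ ha y hy => ha y (h hy)

end Polarity

/-- A formal concept of a polarity: a Galois-stable pair (extension, intension). -/
structure Concept (P : Polarity) : Type where
  ext : Set P.Obj
  int : Set P.Feat
  up_ext : P.up ext = int
  dn_int : P.dn int = ext

namespace Concept

variable {P : Polarity}

/-- Lattice meet of concepts: extensions intersect. -/
def meet (c d : Concept P) : Concept P where
  ext := c.ext ∩ d.ext
  int := P.up (c.ext ∩ d.ext)
  up_ext := rfl
  dn_int := by
    apply Set.Subset.antisymm
    · intro a ha
      constructor
      · rw [← c.dn_int]
        intro y hy
        apply ha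
        rw [← c.up_ext] at hy
        exact P.up_anti Set.inter_subset_left hy
      · rw [← d.dn_int]
        intro y hy
        apply ha
        rw [← d.up_ext] at hy
        exact P.up_anti Set.inter_subset_right hy
    · exact P.subset_dn_up _

/-- Lattice join of concepts: intensions intersect. -/
def join (c d : Concept P) : Concept P where
  ext := P.dn (c.int ∩ d.int)
  int := c.int ∩ d.int
  up_ext := by
    apply Set.Subset.antisymm
    · intro x hx
      constructor
      · rw [← c.up_ext]
        intro b hb
        apply hx
        rw [← c.dn_int] at hb
        exact P.dn_anti Set.inter_subset_left hb
      · rw [← d.up_ext]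
        intro b hb
        apply hx
        rw [← d.dn_int] at hb
        exact P.dn_anti Set.inter_subset_right hb
    · exact P.subset_up_dn _
  dn_int := rfl

/-- The greatest concept. -/
def top (P : Polarity) : Concept P where
  ext := Set.univ
  int := P.up Set.univ
  up_ext := rfl
  dn_int := Set.eq_univ_of_univ_subset (P.subset_dn_up _)

/-- The least concept. -/
def bot (P : Polarity) : Concept P where
  ext := P.dn Set.univ
  int := Set.univ
  up_ext := Set.eq_univ_of_univ_subset (P.subset_up_dn _)
  dn_int := rfl

end Concept

/-- A polarity-based model: a polarity with a valuation of variables into concepts. -/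
structure Model : Type 1 where
  P : Polarity
  V : ℕ → Concept P

namespace Model

/-- Homomorphic extension of the valuation to all formulas. -/
def interp (M : Model) : Fm → Concept M.P
  | .var n => M.V n
  | .bot => Concept.bot M.P
  | .top => Concept.top M.P
  | .and φ ψ => Concept.meet (M.interp φ) (M.interp ψ)
  | .or φ ψ => Concept.join (M.interp φ) (M.interp ψ)

/-- M, a ⊩ φ : the object a is in the extension of φ. -/
def objSat (M : Model) (a : M.P.Obj) (φ : Fm) : Prop := a ∈ (M.interp φ).ext

/-- M, x ≻ φ : the feature x is in the intension of φ. -/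
def featSat (M : Model) (x : M.P.Feat) (φ : Fm) : Prop := x ∈ (M.interp φ).int

end Model

/-- Validity of the sequent φ ⊢ ψ: in every polarity-based model the
extension of φ is contained in the extension of ψ. -/
def SeqValid (φ ψ : Fm) : Prop :=
  ∀ M : Model, (M.interp φ).ext ⊆ (M.interp ψ).ext

/-- A conceptual cumulative consequence relation: reflexive and closed
under (LLE), (RW), (CM) and (Cut). -/
structure IsCumulative (R : Fm → Fm → Prop) : Prop where
  refl : ∀ φ, R φ φ
  lle : ∀ φ ψ χ, SeqValid φ ψ → SeqValid ψ φ → R φ χ → R ψ χ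
  rw : ∀ φ ψ χ, SeqValid φ ψ → R χ φ → R χ ψ
  cm : ∀ φ ψ χ, R φ ψ → R φ χ → R (Fm.and φ ψ) χ
  cut : ∀ φ ψ χ, R (Fm.and φ ψ) χ → R φ ψ → R φ χ

/-- Closure under the rule (Loop). -/
def LoopClosed (R : Fm → Fm → Prop) : Prop :=
  ∀ (n : ℕ) (φ : ℕ → Fm),
    (∀ i < n, R (φ i) (φ (i + 1))) → R (φ n) (φ 0) → R (φ 0) (φ n)

/-- A pointed polarity-based model. -/
structure PointedModel : Type 1 where
  M : Model
  pt : M.P.Obj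

/-- Satisfaction at a pointed model. -/
def PointedModel.sat (Ma : PointedModel) (φ : Fm) : Prop := Ma.M.objSat Ma.pt φ

/-- A pointed model is normal for φ iff it satisfies every plausible consequence of φ. -/
def NormalFor (R : Fm → Fm → Prop) (Ma : PointedModel) (φ : Fm) : Prop :=
  ∀ ψ, R φ ψ → Ma.sat ψ

/-- A pointed model is supernormal for φ. -/
def SupernormalFor (R : Fm → Fm → Prop) (Ma : PointedModel) (φ : Fm) : Prop :=
  ∀ ψ, R φ ψ ↔ Ma.sat ψ

/-- A frame (S, l, ≺): states labelled by sets of pointed polarity-based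
models with a preference relation. -/
structure Frame : Type 2 where
  S : Type
  l : S → Set PointedModel
  prec : S → S → Prop

/-- t is minimal in P (w.r.t. prec). -/
def MinimalIn {α : Type _} (prec : α → α → Prop) (P : Set α) (t : α) : Prop :=
  t ∈ P ∧ ∀ s ∈ P, ¬ prec s t

/-- t is a minimum of P (w.r.t. prec). -/
def IsMinimum {α : Type _} (prec : α → α → Prop) (P : Set α) (t : α) : Prop :=
  t ∈ P ∧ ∀ s ∈ P, s ≠ t → prec t s

/-- P is smooth (w.r.t. prec). -/
def Smooth {α : Type _} (prec : α → α → Prop) (P : Set α) : Prop :=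
  ∀ t ∈ P, MinimalIn prec P t ∨ ∃ s, MinimalIn prec P s ∧ prec s t

namespace Frame

/-- s ⊨ φ : every pointed model in l(s) satisfies φ. -/
def stateSat (F : Frame) (s : F.S) (φ : Fm) : Prop :=
  ∀ Ma ∈ F.l s, Ma.sat φ

/-- φ̂ : the set of states satisfying φ. -/
def hat (F : Frame) (φ : Fm) : Set F.S := {s | F.stateSat s φ}

/-- A conceptual cumulative model: φ̂ is smooth for every φ. -/
def IsCumulativeModel (F : Frame) : Prop :=
  ∀ φ : Fm, Smooth F.prec (F.hat φ)

/-- The consequence relation |~_𝓜 defined by a frame: every state minimal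
in φ̂ belongs to ψ̂. -/
def conseq (F : Frame) (φ ψ : Fm) : Prop :=
  ∀ s, MinimalIn F.prec (F.hat φ) s → s ∈ F.hat ψ

/-- Replace the preference relation of a frame. -/
def withPrec (F : Frame) (p : F.S → F.S → Prop) : Frame := ⟨F.S, F.l, p⟩

end Frame

/-- The equivalence class φ/∼ of φ under ∼ (φ ∼ ψ iff φ |~ ψ and ψ |~ φ). -/
def cls (R : Fm → Fm → Prop) (φ : Fm) : Set Fm := {ψ | R φ ψ ∧ R ψ φ}

/-- φ/∼ ≤ ψ/∼ : there is χ ∈ φ/∼ with ψ |~ χ (ψ any representative of ψ/∼). -/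
def clsLE (R : Fm → Fm → Prop) (C D : Set Fm) : Prop :=
  ∃ χ ∈ C, ∃ ψ ∈ D, R ψ χ

/-- The canonical model of a consequence relation: states are the
equivalence classes φ/∼, labelled by the normal pointed models for φ,
with φ/∼ ≺ ψ/∼ iff φ/∼ ≤ ψ/∼ and φ/∼ ≠ ψ/∼. -/
def canonicalFrame (R : Fm → Fm → Prop) : Frame where
  S := {C : Set Fm // ∃ φ, C = cls R φ}
  l := fun s => {Ma | ∃ φ, s.val = cls R φ ∧ NormalFor R Ma φ}
  prec := fun s t => clsLE R s.val t.val ∧ s ≠ t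

/-- The state φ/∼ of the canonical model. -/
def canonicalState (R : Fm → Fm → Prop) (φ : Fm) : (canonicalFrame R).S :=
  ⟨cls R φ, φ, rfl⟩


/-! ### Auxiliary development for the representation theorem -/

section Aux

/-- Concepts are determined by their extensions. -/
lemma concept_ext_inj {P : Polarity} {c d : Concept P} (h : c.ext = d.ext) : c = d := by
  obtain ⟨e, i, hu, hd⟩ := c
  obtain ⟨e', i', hu', hd'⟩ := d
  simp only at h
  subst h
  have : i = i' := hu.symm.trans hu'
  subst this
  rfl

/- Basic valid sequents. -/

lemma seq_refl (φ : Fm) : SeqValid φ φ := fun _ => subset_rfl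

lemma seq_trans {φ ψ χ : Fm} (h1 : SeqValid φ ψ) (h2 : SeqValid ψ χ) : SeqValid φ χ :=
  fun M => (h1 M).trans (h2 M)

lemma seq_top (φ : Fm) : SeqValid φ Fm.top := fun _ _ _ => trivial

lemma seq_and_left (φ ψ : Fm) : SeqValid (Fm.and φ ψ) φ := fun _ _ ha => ha.1

lemma seq_and_right (φ ψ : Fm) : SeqValid (Fm.and φ ψ) ψ := fun _ _ ha => ha.2

lemma seq_and_intro {φ a b : Fm} (h1 : SeqValid φ a) (h2 : SeqValid φ b) :
    SeqValid φ (Fm.and a b) := fun M x hx => ⟨h1 M hx, h2 M hx⟩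

lemma seq_bot (ψ : Fm) : SeqValid Fm.bot ψ := fun M a ha => by
  rw [← (M.interp ψ).dn_int]
  exact M.P.dn_anti (Set.subset_univ _) ha

lemma seq_or_inl (φ ψ : Fm) : SeqValid φ (Fm.or φ ψ) := fun M a ha => by
  have h : a ∈ M.P.dn (M.interp φ).int := by rw [(M.interp φ).dn_int]; exact ha
  exact M.P.dn_anti Set.inter_subset_left h

lemma seq_or_inr (φ ψ : Fm) : SeqValid ψ (Fm.or φ ψ) := fun M a ha => by
  have h : a ∈ M.P.dn (M.interp ψ).int := by rw [(M.interp ψ).dn_int]; exact ha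
  exact M.P.dn_anti Set.inter_subset_right h

lemma seq_or_elim {φ ψ χ : Fm} (h1 : SeqValid φ χ) (h2 : SeqValid ψ χ) :
    SeqValid (Fm.or φ ψ) χ := fun M a ha => by
  have hφ : (M.interp χ).int ⊆ (M.interp φ).int := by
    rw [← (M.interp χ).up_ext, ← (M.interp φ).up_ext]
    exact M.P.up_anti (h1 M)
  have hψ : (M.interp χ).int ⊆ (M.interp ψ).int := by
    rw [← (M.interp χ).up_ext, ← (M.interp ψ).up_ext]
    exact M.P.up_anti (h2 M)
  have h : a ∈ M.P.dn (M.interp χ).int :=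
    M.P.dn_anti (Set.subset_inter hφ hψ) ha
  rwa [(M.interp χ).dn_int] at h

/- The canonical polarity-based model over filters of formulas. -/

/-- A (possibly improper) filter of formulas. -/
def IsFilt (T : Set Fm) : Prop :=
  Fm.top ∈ T ∧ (∀ a b, a ∈ T → b ∈ T → Fm.and a b ∈ T) ∧
    (∀ a b, a ∈ T → SeqValid a b → b ∈ T)

def Filt : Type := {T : Set Fm // IsFilt T}

/-- The principal filter of a formula. -/
def princ (φ : Fm) : Filt :=
  ⟨{ψ | SeqValid φ ψ},
    seq_top φ,
    fun _ _ ha hb => seq_and_intro ha hb,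
    fun _ _ ha hv => seq_trans ha hv⟩

def canonP : Polarity := ⟨Filt, Fm, fun T ψ => ψ ∈ T.val⟩

/-- The canonical concept of a formula. -/
def canonC (φ : Fm) : Concept canonP where
  ext := {T | φ ∈ T.val}
  int := {ψ | SeqValid φ ψ}
  up_ext := by
    apply Set.Subset.antisymm
    · intro ψ h
      exact h (princ φ) (seq_refl φ)
    · intro ψ hv T hT
      exact T.2.2.2 φ ψ hT hv
  dn_int := by
    apply Set.Subset.antisymm
    · intro T h
      exact h φ (seq_refl φ)
    · intro T hT ψ hv
      exact T.2.2.2 φ ψ hT hv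

def canonM : Model := ⟨canonP, fun n => canonC (.var n)⟩

lemma canon_interp (φ : Fm) : canonM.interp φ = canonC φ := by
  induction φ with
  | var n => rfl
  | bot =>
      apply concept_ext_inj
      apply Set.Subset.antisymm
      · intro T h
        exact h Fm.bot trivial
      · intro T h ψ _
        exact T.2.2.2 Fm.bot ψ h (seq_bot ψ)
  | top =>
      apply concept_ext_inj
      apply Set.Subset.antisymm
      · intro T _
        exact T.2.1
      · intro T _
        trivial
  | and φ ψ ihφ ihψ =>
      apply concept_ext_inj
      show (Concept.meet (canonM.interp φ) (canonM.interp ψ)).ext = _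
      rw [ihφ, ihψ]
      apply Set.Subset.antisymm
      · rintro T ⟨h1, h2⟩
        exact T.2.2.1 φ ψ h1 h2
      · intro T h
        exact ⟨T.2.2.2 _ _ h (seq_and_left φ ψ), T.2.2.2 _ _ h (seq_and_right φ ψ)⟩
  | or φ ψ ihφ ihψ =>
      apply concept_ext_inj
      show (Concept.join (canonM.interp φ) (canonM.interp ψ)).ext = _
      rw [ihφ, ihψ]
      apply Set.Subset.antisymm
      · intro T h
        exact h (Fm.or φ ψ) ⟨seq_or_inl φ ψ, seq_or_inr φ ψ⟩
      · intro T h χ hχ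
        exact T.2.2.2 _ _ h (seq_or_elim hχ.1 hχ.2)

/-- The supernormal pointed model of a filter. -/
def superPt (T : Filt) : PointedModel := ⟨canonM, T⟩

lemma superPt_sat (T : Filt) (ψ : Fm) : (superPt T).sat ψ ↔ ψ ∈ T.val := by
  show T ∈ (canonM.interp ψ).ext ↔ ψ ∈ T.val
  rw [canon_interp]
  exact Iff.rfl

/- Derived rules of cumulative consequence relations. -/

variable {R : Fm → Fm → Prop}

lemma seq_and_comm (φ ψ : Fm) : SeqValid (Fm.and φ ψ) (Fm.and ψ φ) :=
  seq_and_intro (seq_and_right φ ψ) (seq_and_left φ ψ)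

lemma seq_and_assoc' (φ a b : Fm) :
    SeqValid (Fm.and (Fm.and φ a) b) (Fm.and a b) :=
  seq_and_intro (seq_trans (seq_and_left _ b) (seq_and_right φ a)) (seq_and_right _ b)

lemma andR (hc : IsCumulative R) {φ a b : Fm} (h1 : R φ a) (h2 : R φ b) :
    R φ (Fm.and a b) := by
  have s1 : R (Fm.and φ a) b := hc.cm φ a b h1 h2
  have s2 : R (Fm.and (Fm.and φ a) b) (Fm.and a b) :=
    hc.rw _ _ _ (seq_and_assoc' φ a b) (hc.refl _)
  have s3 : R (Fm.and φ a) (Fm.and a b) := hc.cut _ _ _ s2 s1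
  exact hc.cut _ _ _ s3 h1

lemma equiv_cons (hc : IsCumulative R) {φ ψ χ : Fm} (h1 : R φ ψ) (h2 : R ψ φ)
    (h3 : R φ χ) : R ψ χ := by
  have c1 : R (Fm.and φ ψ) χ := hc.cm φ ψ χ h1 h3
  have c2 : R (Fm.and ψ φ) χ :=
    hc.lle _ _ _ (seq_and_comm φ ψ) (seq_and_comm ψ φ) c1
  exact hc.cut _ _ _ c2 h2

/-- The filter of plausible consequences of a formula. -/
def Tfil (hc : IsCumulative R) (s : Fm) : Filt :=
  ⟨{ψ | R s ψ},
    hc.rw _ _ _ (seq_top s) (hc.refl s),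
    fun _ _ ha hb => andR hc ha hb,
    fun _ _ ha hv => hc.rw _ _ _ hv ha⟩

/- Chains and the Loop rule. -/

lemma reach_chain {a b : Fm} (h : Relation.ReflTransGen R a b) :
    ∃ n, ∃ f : ℕ → Fm, f 0 = a ∧ f n = b ∧ ∀ i < n, R (f i) (f (i + 1)) := by
  induction h with
  | refl => exact ⟨0, fun _ => a, rfl, rfl, fun i hi => absurd hi (Nat.not_lt_zero i)⟩
  | @tail b c _ h2 ih =>
      obtain ⟨n, f, h0, hn, hs⟩ := ih
      refine ⟨n + 1, fun i => if i = n + 1 then c else f i, ?_, ?_, ?_⟩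
      · show (if (0:ℕ) = n + 1 then c else f 0) = a
        rw [if_neg (by omega : (0:ℕ) ≠ n + 1)]
        exact h0
      · show (if n + 1 = n + 1 then c else f (n + 1)) = c
        rw [if_pos rfl]
      · intro i hi
        show R (if i = n + 1 then c else f i) (if i + 1 = n + 1 then c else f (i + 1))
        by_cases hin : i = n
        · rw [if_neg (by omega : i ≠ n + 1), if_pos (by omega : i + 1 = n + 1), hin, hn]
          exact h2
        · rw [if_neg (by omega : i ≠ n + 1), if_neg (by omega : i + 1 ≠ n + 1)]
          exact hs i (by omega)

lemma loop_of_reach (hl : LoopClosed R) {a b : Fm}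
    (hr : Relation.ReflTransGen R a b) (hb : R b a) : R a b := by
  obtain ⟨n, f, h0, hn, hs⟩ := reach_chain hr
  have h := hl n f hs (by rw [h0, hn]; exact hb)
  rwa [h0, hn] at h

/- The canonical frame with singleton labels. -/

/-- The preferential ordered frame associated to a cumulative relation. -/
def myFrame (hc : IsCumulative R) : Frame where
  S := Fm
  l := fun s => {superPt (Tfil hc s)}
  prec := fun s t => Relation.ReflTransGen R t s ∧ ¬ Relation.ReflTransGen R s t

lemma myFrame_stateSat (hc : IsCumulative R) (s ψ : Fm) :
    (myFrame hc).stateSat s ψ ↔ R s ψ := by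
  constructor
  · intro h
    exact (superPt_sat _ ψ).1 (h _ rfl)
  · intro h Ma hMa
    rw [show Ma = superPt (Tfil hc s) from hMa]
    exact (superPt_sat _ ψ).2 h

lemma myFrame_hat (hc : IsCumulative R) (s ψ : Fm) :
    s ∈ (myFrame hc).hat ψ ↔ R s ψ := myFrame_stateSat hc s ψ

lemma myFrame_minB (hc : IsCumulative R) {φ t : Fm} (h1 : R φ t) (h2 : R t φ) :
    MinimalIn (myFrame hc).prec ((myFrame hc).hat φ) t := by
  refine ⟨(myFrame_hat hc t φ).2 h2, ?_⟩
  rintro s hs ⟨hreach, hnr⟩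
  exact hnr (Relation.ReflTransGen.trans
    (Relation.ReflTransGen.single ((myFrame_hat hc s φ).1 hs))
    (Relation.ReflTransGen.single h1))

lemma myFrame_precA (hc : IsCumulative R) (hl : LoopClosed R) {φ t : Fm}
    (ht : R t φ) (hn : ¬ R φ t) : (myFrame hc).prec φ t := by
  refine ⟨Relation.ReflTransGen.single ht, ?_⟩
  intro hr
  exact hn (loop_of_reach hl hr ht)

lemma myFrame_cum (hc : IsCumulative R) (hl : LoopClosed R) :
    (myFrame hc).IsCumulativeModel := by
  intro ψ t ht
  have htψ : R t ψ := (myFrame_hat hc t ψ).1 ht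
  by_cases hψt : R ψ t
  · exact Or.inl (myFrame_minB hc hψt htψ)
  · exact Or.inr ⟨ψ, myFrame_minB hc (hc.refl ψ) (hc.refl ψ), myFrame_precA hc hl htψ hψt⟩

lemma myFrame_conseq (hc : IsCumulative R) (hl : LoopClosed R) :
    R = (myFrame hc).conseq := by
  funext φ ψ
  apply propext
  constructor
  · intro h s hmin
    have hsφ : R s φ := (myFrame_hat hc s φ).1 hmin.1
    have hφs : R φ s := by
      by_contra hn
      exact hmin.2 φ ((myFrame_hat hc φ φ).2 (hc.refl φ)) (myFrame_precA hc hl hsφ hn)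
    exact (myFrame_hat hc s ψ).2 (equiv_cons hc hφs hsφ h)
  · intro h
    exact (myFrame_hat hc φ ψ).1 (h φ (myFrame_minB hc (hc.refl φ) (hc.refl φ)))

/- Soundness: frames yield loop-cumulative relations. -/

lemma hat_mono (F : Frame) {φ ψ : Fm} (hv : SeqValid φ ψ) : F.hat φ ⊆ F.hat ψ :=
  fun _ hs Ma hMa => hv Ma.M (hs Ma hMa)

lemma hat_and (F : Frame) (φ ψ : Fm) :
    F.hat (Fm.and φ ψ) = F.hat φ ∩ F.hat ψ := by
  ext s
  constructor
  · intro h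
    exact ⟨fun Ma hMa => (h Ma hMa).1, fun Ma hMa => (h Ma hMa).2⟩
  · rintro ⟨h1, h2⟩ Ma hMa
    exact ⟨h1 Ma hMa, h2 Ma hMa⟩

lemma sound_cumulative (F : Frame) (hcm : F.IsCumulativeModel) :
    IsCumulative F.conseq := by
  constructor
  · intro φ s hs
    exact hs.1
  · intro φ ψ χ h1 h2 h s hs
    have he : F.hat φ = F.hat ψ := Set.Subset.antisymm (hat_mono F h1) (hat_mono F h2)
    apply h s
    rwa [he]
  · intro φ ψ χ hv h s hs
    exact hat_mono F hv (h s hs)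
  · intro φ ψ χ h1 h2 s hs
    rw [hat_and] at hs
    have hsmin : MinimalIn F.prec (F.hat φ) s := by
      rcases hcm φ s hs.1.1 with hmin | ⟨m, hm, hms⟩
      · exact hmin
      · exact absurd hms (hs.2 m ⟨hm.1, h1 m hm⟩)
    exact h2 s hsmin
  · intro φ ψ χ h1 h2 s hs
    have hψ : s ∈ F.hat ψ := h2 s hs
    refine h1 s ⟨?_, ?_⟩
    · rw [hat_and]
      exact ⟨hs.1, hψ⟩
    · intro u hu hus
      rw [hat_and] at hu
      exact hs.2 u hu.1 hus

lemma sound_loop (F : Frame) (hcm : F.IsCumulativeModel) (htr : Transitive F.prec) :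
    LoopClosed F.conseq := by
  intro n φs hsteps hlast s hs
  have key : ∀ i, i ≤ n →
      ∃ t, MinimalIn F.prec (F.hat (φs i)) t ∧ (t = s ∨ F.prec t s) := by
    intro i
    induction i with
    | zero => exact fun _ => ⟨s, hs, Or.inl rfl⟩
    | succ i ih =>
        intro hin
        obtain ⟨t, htmin, hts⟩ := ih (Nat.le_of_succ_le hin)
        have ht1 : t ∈ F.hat (φs (i + 1)) := hsteps i (Nat.lt_of_succ_le hin) t htmin
        rcases hcm (φs (i + 1)) t ht1 with hmin | ⟨m, hm, hmt⟩
        · exact ⟨t, hmin, hts⟩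
        · refine ⟨m, hm, Or.inr ?_⟩
          rcases hts with rfl | h
          · exact hmt
          · exact htr hmt h
  obtain ⟨t, htmin, hts⟩ := key n le_rfl
  have ht0 : t ∈ F.hat (φs 0) := hlast t htmin
  rcases hts with rfl | h
  · exact htmin.1
  · exact absurd h (hs.2 t ht0)

end Aux

/-- representation theorem for conceptual preferential
ordered models. -/
theorem representation_preferential_ordered (R : Fm → Fm → Prop) :
    (IsCumulative R ∧ LoopClosed R) ↔
    ∃ F : Frame, F.IsCumulativeModel ∧
      (∀ s : F.S, ∃ Ma : PointedModel, F.l s = {Ma}) ∧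
      Irreflexive F.prec ∧ Transitive F.prec ∧ R = F.conseq := by
  constructor
  · rintro ⟨hc, hl⟩
    refine ⟨myFrame hc, myFrame_cum hc hl, fun s => ⟨superPt (Tfil hc s), rfl⟩, ?_, ?_,
      myFrame_conseq hc hl⟩
    · rintro s ⟨h1, h2⟩
      exact h2 Relation.ReflTransGen.refl
    · rintro a b c ⟨r1, n1⟩ ⟨r2, n2⟩
      refine ⟨r2.trans r1, ?_⟩
      intro h
      exact n2 (r1.trans h)
  · rintro ⟨F, hcm, _, _, htr, rfl⟩
    exact ⟨sound_cumulative F hcm, sound_loop F hcm htr⟩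

end DR
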